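/- For an almost contact metric manifold M the following conditions are equivalent: (1) M is a CR-manifold and the tensor field h = (1/2)·L_ξφ vanishes identically; (2) M is η-normal and h vanishes identically; (3) M is normal, i.e. N^(1) = [φ,φ] + 2dη⊗ξ = 0 identically. -/
import Mathlib


noncomputable section

/-!
An abstract model of smooth geometry: `F` plays the role of the algebra of
smooth real-valued functions on a manifold `M`, `V` plays the role of the
`C^∞(M)`-module of smooth vector fields on `M` (with its Lie bracket), and
`D X f` represents the directional derivative of the function `f` along the
vector field `X`.
-/
structure SmoothSetting (F V : Type*) [CommRing F] [Algebra ℝ F]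
    [LieRing V] [Module F V] [Module ℝ V] [IsScalarTower ℝ F V] where
  D : V → F → F
  D_add : ∀ (X : V) (f g : F), D X (f + g) = D X f + D X g
  D_mul : ∀ (X : V) (f g : F), D X (f * g) = f * D X g + g * D X f
  D_addX : ∀ (X Y : V) (f : F), D (X + Y) f = D X f + D Y f
  D_smulX : ∀ (f : F) (X : V) (k : F), D (f • X) k = f * D X k
  D_bracket : ∀ (X Y : V) (f : F), D ⁅X, Y⁆ f = D X (D Y f) - D Y (D X f)
  bracket_smul : ∀ (f : F) (X Y : V), ⁅X, f • Y⁆ = f • ⁅X, Y⁆ + D X f • Y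

/-- An almost contact metric manifold, modelled abstractly: a quadruple
`(φ, ξ, η, g)` where `φ` is a `(1,1)`-tensor field, `ξ` a vector field, `η` a
one-form and `g` a Riemannian metric, satisfying `φ² = -Id + η ⊗ ξ`,
`η(ξ) = 1` and `g(φX, φY) = g(X,Y) - η(X)η(Y)`, together with the Levi-Civita
connection `nabla` of `g` (characterised by metricity and torsion-freeness). -/
structure ACMS (F V : Type*) [CommRing F] [PartialOrder F] [Algebra ℝ F]
    [LieRing V] [Module F V] [Module ℝ V] [IsScalarTower ℝ F V]
    extends SmoothSetting F V where
  phi : V → V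
  xi : V
  eta : V → F
  g : V → V → F
  phi_add : ∀ X Y : V, phi (X + Y) = phi X + phi Y
  phi_smul : ∀ (f : F) (X : V), phi (f • X) = f • phi X
  eta_add : ∀ X Y : V, eta (X + Y) = eta X + eta Y
  eta_smul : ∀ (f : F) (X : V), eta (f • X) = f * eta X
  g_addX : ∀ X Y Z : V, g (X + Y) Z = g X Z + g Y Z
  g_smulX : ∀ (f : F) (X Y : V), g (f • X) Y = f * g X Y
  g_symm : ∀ X Y : V, g X Y = g Y X
  g_nondeg : ∀ X : V, (∀ Y : V, g X Y = 0) → X = 0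
  g_pos : ∀ X : V, 0 ≤ g X X
  phi_phi : ∀ X : V, phi (phi X) = -X + eta X • xi
  eta_xi : eta xi = 1
  phi_xi : phi xi = 0
  eta_phi : ∀ X : V, eta (phi X) = 0
  g_phi_phi : ∀ X Y : V, g (phi X) (phi Y) = g X Y - eta X * eta Y
  nabla : V → V → V
  nabla_addX : ∀ X Y Z : V, nabla (X + Y) Z = nabla X Z + nabla Y Z
  nabla_smulX : ∀ (f : F) (X Y : V), nabla (f • X) Y = f • nabla X Y
  nabla_addY : ∀ X Y Z : V, nabla X (Y + Z) = nabla X Y + nabla X Z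
  nabla_leibniz : ∀ (X : V) (f : F) (Y : V),
    nabla X (f • Y) = D X f • Y + f • nabla X Y
  nabla_torsion_free : ∀ X Y : V, nabla X Y - nabla Y X = ⁅X, Y⁆
  nabla_metric : ∀ X Y Z : V,
    D X (g Y Z) = g (nabla X Y) Z + g Y (nabla X Z)

namespace ACMS

variable {F V : Type*} [CommRing F] [PartialOrder F] [Algebra ℝ F]
  [LieRing V] [Module F V] [Module ℝ V] [IsScalarTower ℝ F V]
variable (A : ACMS F V)

/-- The fundamental form `Φ(X,Y) = g(X, φY)`. -/
def Phi (X Y : V) : F := A.g X (A.phi Y)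

/-- The exterior derivative `dη`, via the coboundary formula
`2 dη(X,Y) = X η(Y) - Y η(X) - η([X,Y])`. -/
def dEta (X Y : V) : F :=
  ((1:ℝ)/2) • (A.D X (A.eta Y) - A.D Y (A.eta X) - A.eta ⁅X, Y⁆)

/-- The exterior derivative `dΦ`, via the coboundary formula. -/
def dPhi (X Y Z : V) : F :=
  ((1:ℝ)/3) • (A.D X (A.Phi Y Z) + A.D Y (A.Phi Z X) + A.D Z (A.Phi X Y)
    - A.Phi ⁅X, Y⁆ Z - A.Phi ⁅Y, Z⁆ X - A.Phi ⁅Z, X⁆ Y)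

/-- The Lie derivative `(L_ξ η)(X)`. -/
def lieEta (X : V) : F := A.D A.xi (A.eta X) - A.eta ⁅A.xi, X⁆

/-- The Lie derivative `(L_ξ g)(X,Y)`. -/
def lieG (X Y : V) : F :=
  A.D A.xi (A.g X Y) - A.g ⁅A.xi, X⁆ Y - A.g X ⁅A.xi, Y⁆

/-- The Lie derivative `(L_ξ Φ)(X,Y)`. -/
def liePhiForm (X Y : V) : F :=
  A.D A.xi (A.Phi X Y) - A.Phi ⁅A.xi, X⁆ Y - A.Phi X ⁅A.xi, Y⁆

/-- The Lie derivative `(L_ξ φ)(X)`. -/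
def liePhi (X : V) : V := ⁅A.xi, A.phi X⁆ - A.phi ⁅A.xi, X⁆

/-- The tensor field `h = (1/2) L_ξ φ`. -/
def h (X : V) : V := ((1:ℝ)/2) • A.liePhi X

/-- The Nijenhuis torsion `[φ,φ](X,Y)`. -/
def nijPhi (X Y : V) : V :=
  A.phi (A.phi ⁅X, Y⁆) + ⁅A.phi X, A.phi Y⁆
    - A.phi ⁅A.phi X, Y⁆ - A.phi ⁅X, A.phi Y⁆

/-- The tensor `N⁽¹⁾(X,Y) = [φ,φ](X,Y) + 2 dη(X,Y) ξ`. -/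
def N1 (X Y : V) : V := A.nijPhi X Y + (2 * A.dEta X Y) • A.xi

/-- The tensor `N⁽²⁾(X,Y) = (L_{φX} η)(Y) - (L_{φY} η)(X)`. -/
def N2 (X Y : V) : F :=
  (A.D (A.phi X) (A.eta Y) - A.eta ⁅A.phi X, Y⁆)
    - (A.D (A.phi Y) (A.eta X) - A.eta ⁅A.phi Y, X⁆)

/-- The covariant derivative `(∇_X φ)(Y)`. -/
def covPhi (X Y : V) : V := A.nabla X (A.phi Y) - A.phi (A.nabla X Y)

/-- The covariant derivative `(∇_X η)(Y)`. -/
def covEta (X Y : V) : F := A.D X (A.eta Y) - A.eta (A.nabla X Y)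

/-- `M` is `η`-normal: `N⁽¹⁾(X,Y) = 0` whenever `η(X) = η(Y) = 0`. -/
def EtaNormal : Prop := ∀ X Y : V, A.eta X = 0 → A.eta Y = 0 → A.N1 X Y = 0

/-- `M` is normal: `N⁽¹⁾ = 0` identically. -/
def Normal : Prop := ∀ X Y : V, A.N1 X Y = 0

/-- `M` is a CR-manifold: for all `X, Y` with `η(X) = η(Y) = 0` there is `Z`
with `η(Z) = 0` and `[X - iφX, Y - iφY] = Z - iφZ` (stated here via its real
and imaginary parts). -/
def IsCR : Prop := ∀ X Y : V, A.eta X = 0 → A.eta Y = 0 →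
  ∃ Z : V, A.eta Z = 0 ∧ ⁅X, Y⁆ - ⁅A.phi X, A.phi Y⁆ = Z ∧
    ⁅A.phi X, Y⁆ + ⁅X, A.phi Y⁆ = A.phi Z

/-- `Dc` is a linear connection on `M`. -/
def IsConnection (Dc : V → V → V) : Prop :=
  (∀ X Y Z : V, Dc (X + Y) Z = Dc X Z + Dc Y Z) ∧
  (∀ (f : F) (X Y : V), Dc (f • X) Y = f • Dc X Y) ∧
  (∀ X Y Z : V, Dc X (Y + Z) = Dc X Y + Dc X Z) ∧
  (∀ (X : V) (f : F) (Y : V), Dc X (f • Y) = A.D X f • Y + f • Dc X Y)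

/-- `Dc` is a parallelization: a linear connection making the whole almost
contact metric structure parallel, `∇̃φ = 0`, `∇̃ξ = 0`, `∇̃η = 0`, `∇̃g = 0`. -/
def IsParallelization (Dc : V → V → V) : Prop :=
  A.IsConnection Dc ∧
  (∀ X Y : V, Dc X (A.phi Y) = A.phi (Dc X Y)) ∧
  (∀ X : V, Dc X A.xi = 0) ∧
  (∀ X Y : V, A.D X (A.eta Y) = A.eta (Dc X Y)) ∧
  (∀ X Y Z : V, A.D X (A.g Y Z) = A.g (Dc X Y) Z + A.g Y (Dc X Z))

end ACMS

namespace ACMS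

variable {F V : Type*} [CommRing F] [PartialOrder F] [Algebra ℝ F]
  [LieRing V] [Module F V] [Module ℝ V] [IsScalarTower ℝ F V]
variable (A : ACMS F V)

lemma D_zero (X : V) : A.D X 0 = 0 := by
  have h := A.D_add X 0 0
  rw [add_zero] at h
  exact (left_eq_add.mp h)

lemma D_one (X : V) : A.D X 1 = 0 := by
  have h := A.D_mul X 1 1
  rw [mul_one, one_mul] at h
  exact (left_eq_add.mp h)

lemma phi_zero : A.phi 0 = 0 := by
  have h := A.phi_smul 0 0
  simpa using h

lemma eta_zero : A.eta 0 = 0 := by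
  have h := A.eta_smul 0 0
  simpa using h

lemma phi_neg (X : V) : A.phi (-X) = -A.phi X := by
  have h := A.phi_smul (-1 : F) X
  simpa [neg_one_smul] using h

lemma eta_neg (X : V) : A.eta (-X) = -A.eta X := by
  have h := A.eta_smul (-1 : F) X
  simpa [neg_one_smul] using h

lemma phi_sub (X Y : V) : A.phi (X - Y) = A.phi X - A.phi Y := by
  rw [sub_eq_add_neg, A.phi_add, A.phi_neg, ← sub_eq_add_neg]

lemma eta_sub (X Y : V) : A.eta (X - Y) = A.eta X - A.eta Y := by
  rw [sub_eq_add_neg, A.eta_add, A.eta_neg, ← sub_eq_add_neg]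

lemma eta_phi_phi (X : V) : A.eta (A.phi (A.phi X)) = 0 := by
  rw [A.phi_phi, A.eta_add, A.eta_neg, A.eta_smul, A.eta_xi, mul_one,
    neg_add_cancel]

lemma bracket_smulX (f : F) (X Y : V) :
    ⁅f • X, Y⁆ = f • ⁅X, Y⁆ - A.D Y f • X := by
  have h : ⁅f • X, Y⁆ = -⁅Y, f • X⁆ := (lie_skew _ _).symm
  rw [h, A.bracket_smul, neg_add, ← smul_neg, lie_skew, ← sub_eq_add_neg]

private lemma half_two (c : F) : 2 * (((1:ℝ)/2) • c) = c := by
  rw [mul_smul_comm, two_mul, smul_add, ← add_smul]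
  norm_num

private lemma half_smul_eq_zero {x : V} (h : ((1:ℝ)/2) • x = 0) : x = 0 := by
  have h2 := congrArg (fun y => (2:ℝ) • y) h
  simp only [smul_smul, smul_zero] at h2
  norm_num at h2
  exact h2

lemma N1_eq (X Y : V) : A.N1 X Y =
    A.nijPhi X Y + (A.D X (A.eta Y) - A.D Y (A.eta X) - A.eta ⁅X, Y⁆) • A.xi := by
  unfold N1 dEta
  rw [half_two]

lemma hz_br (hz : ∀ X : V, A.h X = 0) (X : V) :
    ⁅A.xi, A.phi X⁆ = A.phi ⁅A.xi, X⁆ := by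
  have h1 : A.liePhi X = 0 := half_smul_eq_zero (hz X)
  unfold liePhi at h1
  exact sub_eq_zero.mp h1

lemma lieEta_zero (hz : ∀ X : V, A.h X = 0) (Y : V) :
    A.eta ⁅A.xi, Y⁆ = A.D A.xi (A.eta Y) := by
  have hY : Y = A.eta Y • A.xi - A.phi (A.phi Y) := by
    rw [A.phi_phi]; abel
  calc A.eta ⁅A.xi, Y⁆
      = A.eta ⁅A.xi, A.eta Y • A.xi - A.phi (A.phi Y)⁆ := by rw [← hY]
    _ = A.eta ⁅A.xi, A.eta Y • A.xi⁆ - A.eta ⁅A.xi, A.phi (A.phi Y)⁆ := by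
        rw [lie_sub, A.eta_sub]
    _ = A.D A.xi (A.eta Y) := by
        rw [A.bracket_smul, lie_self, smul_zero, zero_add, A.eta_smul,
          A.eta_xi, mul_one, A.hz_br hz, A.eta_phi, sub_zero]

lemma N1_xi_left (hz : ∀ X : V, A.h X = 0) (Y : V) : A.N1 A.xi Y = 0 := by
  rw [N1_eq]
  unfold nijPhi
  rw [A.phi_xi, zero_lie, zero_lie, A.phi_zero, A.eta_xi, A.D_one,
    A.hz_br hz, A.lieEta_zero hz]
  simp

lemma N1_xi_right (hz : ∀ X : V, A.h X = 0) (X : V) : A.N1 X A.xi = 0 := by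
  rw [N1_eq]
  unfold nijPhi
  have hb : ⁅A.phi X, A.xi⁆ = A.phi ⁅X, A.xi⁆ := by
    have h1 : ⁅A.phi X, A.xi⁆ = -⁅A.xi, A.phi X⁆ := (lie_skew _ _).symm
    rw [h1, A.hz_br hz, ← A.phi_neg, lie_skew]
  have he : A.eta ⁅X, A.xi⁆ = -A.D A.xi (A.eta X) := by
    have h1 : ⁅X, A.xi⁆ = -⁅A.xi, X⁆ := (lie_skew _ _).symm
    rw [h1, A.eta_neg, A.lieEta_zero hz]
  rw [A.phi_xi, lie_zero, lie_zero, A.phi_zero, hb, A.eta_xi, A.D_one, he]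
  simp

lemma N1_addX (X X' Y : V) : A.N1 (X + X') Y = A.N1 X Y + A.N1 X' Y := by
  rw [N1_eq, N1_eq, N1_eq]
  unfold nijPhi
  simp only [add_lie, A.phi_add, A.eta_add, A.D_addX, A.D_add]
  module

lemma N1_addY (X Y Y' : V) : A.N1 X (Y + Y') = A.N1 X Y + A.N1 X Y' := by
  rw [N1_eq, N1_eq, N1_eq]
  unfold nijPhi
  simp only [lie_add, A.phi_add, A.eta_add, A.D_addX, A.D_add]
  module

lemma N1_smulX (f : F) (X Y : V) : A.N1 (f • X) Y = f • A.N1 X Y := by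
  rw [N1_eq, N1_eq]
  unfold nijPhi
  simp only [A.phi_smul, A.bracket_smulX, A.eta_smul, A.D_smulX, A.D_mul,
    A.phi_sub, A.phi_smul, A.eta_sub, A.eta_smul]
  match_scalars <;> ring

lemma N1_smulY (f : F) (X Y : V) : A.N1 X (f • Y) = f • A.N1 X Y := by
  rw [N1_eq, N1_eq]
  unfold nijPhi
  simp only [A.phi_smul, A.bracket_smul, A.eta_smul, A.D_smulX, A.D_mul,
    A.phi_add, A.phi_smul, A.eta_add, A.eta_smul]
  match_scalars <;> ring

lemma normal_lieEta (hn : A.Normal) (X : V) :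
    A.D A.xi (A.eta X) = A.eta ⁅A.xi, X⁆ := by
  have h := hn A.xi X
  rw [N1_eq] at h
  have h2 := congrArg A.eta h
  unfold nijPhi at h2
  simp only [A.phi_xi, zero_lie, lie_zero, A.phi_zero, A.eta_add, A.eta_sub,
    A.eta_zero, A.eta_phi, A.eta_phi_phi, A.eta_smul, A.eta_xi, A.D_one,
    mul_one, sub_zero, zero_add, add_zero, zero_sub, sub_self] at h2
  linear_combination h2

lemma normal_h_zero (hn : A.Normal) (X : V) : A.h X = 0 := by
  have hle := A.normal_lieEta hn
  have hbr : A.eta ⁅A.xi, A.phi X⁆ = 0 := by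
    rw [← hle, A.eta_phi, A.D_zero]
  have hh := hn A.xi X
  rw [N1_eq] at hh
  unfold nijPhi at hh
  rw [A.phi_xi, zero_lie, zero_lie, A.phi_zero, A.eta_xi, A.D_one, ← hle] at hh
  simp only [sub_zero, sub_self, zero_smul, add_zero, sub_zero] at hh
  -- h : A.phi (A.phi ⁅A.xi, X⁆) - A.phi ⁅A.xi, A.phi X⁆ = 0  (roughly)
  have h4 : A.phi (A.phi ⁅A.xi, X⁆) = A.phi ⁅A.xi, A.phi X⁆ := by
    have h' : A.phi (A.phi ⁅A.xi, X⁆) - A.phi ⁅A.xi, A.phi X⁆ = 0 := by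
      linear_combination (norm := module) hh
    exact sub_eq_zero.mp h'
  have h5 := congrArg A.phi h4
  rw [A.phi_phi, A.phi_phi] at h5
  rw [A.eta_phi, zero_smul, add_zero, hbr, zero_smul, add_zero] at h5
  have h6 : ⁅A.xi, A.phi X⁆ = A.phi ⁅A.xi, X⁆ := by
    have := congrArg Neg.neg h5
    rw [neg_neg, neg_neg] at this
    exact this.symm
  show ((1:ℝ)/2) • A.liePhi X = 0
  unfold liePhi
  rw [h6, sub_self, smul_zero]

lemma eta_normal_h_zero_to_normal (hen : A.EtaNormal)
    (hz : ∀ X : V, A.h X = 0) : A.Normal := by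
  intro X Y
  have hXd : X = A.eta X • A.xi + -A.phi (A.phi X) := by
    rw [A.phi_phi]; abel
  have hYd : Y = A.eta Y • A.xi + -A.phi (A.phi Y) := by
    rw [A.phi_phi]; abel
  have hXh : A.eta (-A.phi (A.phi X)) = 0 := by
    rw [A.eta_neg, A.eta_phi_phi, neg_zero]
  have hYh : A.eta (-A.phi (A.phi Y)) = 0 := by
    rw [A.eta_neg, A.eta_phi_phi, neg_zero]
  calc A.N1 X Y = A.N1 (A.eta X • A.xi + -A.phi (A.phi X)) Y := by rw [← hXd]
    _ = A.eta X • A.N1 A.xi Y + A.N1 (-A.phi (A.phi X)) Y := by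
        rw [A.N1_addX, A.N1_smulX]
    _ = A.N1 (-A.phi (A.phi X)) Y := by
        rw [A.N1_xi_left hz, smul_zero, zero_add]
    _ = A.N1 (-A.phi (A.phi X)) (A.eta Y • A.xi + -A.phi (A.phi Y)) := by
        rw [← hYd]
    _ = A.eta Y • A.N1 (-A.phi (A.phi X)) A.xi
          + A.N1 (-A.phi (A.phi X)) (-A.phi (A.phi Y)) := by
        rw [A.N1_addY, A.N1_smulY]
    _ = 0 := by
        rw [A.N1_xi_right hz, smul_zero, zero_add, hen _ _ hXh hYh]

lemma CR_to_etaNormal (hcr : A.IsCR) : A.EtaNormal := by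
  intro X Y hX hY
  obtain ⟨Z, hZ, h1, h2⟩ := hcr X Y hX hY
  rw [N1_eq]
  unfold nijPhi
  have hW : ⁅X, Y⁆ = Z + ⁅A.phi X, A.phi Y⁆ := by rw [← h1]; abel
  have f2 : A.phi ⁅A.phi X, Y⁆ + A.phi ⁅X, A.phi Y⁆ = A.phi (A.phi Z) := by
    rw [← A.phi_add, h2]
  have f1 := A.phi_phi (Z + ⁅A.phi X, A.phi Y⁆)
  have f3 := A.phi_phi Z
  have hZxi : A.eta Z • A.xi = (0:V) := by rw [hZ, zero_smul]
  rw [hX, hY, A.D_zero, A.D_zero, hW]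
  linear_combination (norm := module) f1 - f2 - f3 - hZxi

lemma normal_eta_brphiphi (hn : A.Normal) (X Y : V) :
    A.eta ⁅A.phi X, A.phi Y⁆
      = -(A.D X (A.eta Y) - A.D Y (A.eta X) - A.eta ⁅X, Y⁆) := by
  have h := hn X Y
  rw [N1_eq] at h
  have h2 := congrArg A.eta h
  unfold nijPhi at h2
  simp only [A.eta_add, A.eta_sub, A.eta_smul, A.eta_phi, A.eta_phi_phi,
    A.eta_xi, A.eta_zero, mul_one] at h2
  linear_combination h2

lemma normal_to_CR (hn : A.Normal) : A.IsCR := by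
  intro X Y hX hY
  refine ⟨⁅X, Y⁆ - ⁅A.phi X, A.phi Y⁆, ?_, rfl, ?_⟩
  · rw [A.eta_sub, A.normal_eta_brphiphi hn, hX, hY, A.D_zero, A.D_zero]
    ring
  · have hb : A.eta ⁅A.phi X, Y⁆ + A.eta ⁅X, A.phi Y⁆ = 0 := by
      have h := A.normal_eta_brphiphi hn X (A.phi Y)
      rw [A.phi_phi, hY, zero_smul, add_zero, lie_neg, A.eta_neg, A.eta_phi,
        A.D_zero, hX, A.D_zero] at h
      linear_combination -h
    have h := hn X Y
    rw [N1_eq] at h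
    unfold nijPhi at h
    rw [hX, hY, A.D_zero, A.D_zero, A.phi_phi] at h
    have hphiV : A.phi ⁅A.phi X, Y⁆ + A.phi ⁅X, A.phi Y⁆
        = ⁅A.phi X, A.phi Y⁆ - ⁅X, Y⁆ := by
      linear_combination (norm := module) -h
    have h5 := congrArg A.phi hphiV
    rw [A.phi_add, A.phi_phi, A.phi_phi, A.phi_sub] at h5
    have hb2 : A.eta ⁅X, A.phi Y⁆ = -A.eta ⁅A.phi X, Y⁆ := by
      linear_combination hb
    rw [hb2] at h5
    rw [A.phi_sub]
    linear_combination (norm := module) -h5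

end ACMS

/-- For an almost contact metric manifold `M` the following are
equivalent: (1) `M` is a CR-manifold and `h = (1/2) L_ξ φ` vanishes;
(2) `M` is `η`-normal and `h` vanishes; (3) `M` is normal. -/
theorem CR_with_h_zero_iff_eta_normal_with_h_zero_iff_normal
    {F V : Type*} [CommRing F] [PartialOrder F] [Algebra ℝ F]
    [LieRing V] [Module F V] [Module ℝ V] [IsScalarTower ℝ F V]
    (A : ACMS F V) :
    ((A.IsCR ∧ ∀ X : V, A.h X = 0) ↔ (A.EtaNormal ∧ ∀ X : V, A.h X = 0)) ∧
    ((A.EtaNormal ∧ ∀ X : V, A.h X = 0) ↔ A.Normal) := by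
  have lem2 : (A.EtaNormal ∧ ∀ X : V, A.h X = 0) ↔ A.Normal := by
    constructor
    · rintro ⟨hen, hz⟩
      exact A.eta_normal_h_zero_to_normal hen hz
    · intro hn
      exact ⟨fun X Y _ _ => hn X Y, A.normal_h_zero hn⟩
  refine ⟨?_, lem2⟩
  constructor
  · rintro ⟨hcr, hz⟩
    exact ⟨A.CR_to_etaNormal hcr, hz⟩
  · rintro ⟨hen, hz⟩
    exact ⟨A.normal_to_CR (lem2.mp ⟨hen, hz⟩), hz⟩
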